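/- Define h(γ1) = [1 + cos(2γ1) + √2 sin γ1]² / [3 + cos(2γ1)]² for γ1 ∈ [π/4, π/2]. Then h is monotonically increasing on [π/4, π/2], its minimum is h(π/4) = 4/9, and this minimum is attained only at γ1 = π/4. -/

import Mathlib

/-!
With `s = sin γ`, `cos 2γ = 1 - 2s²` and both numerator and denominator factor:
`2 + √2 s - 2s² = (1 + √2 s)(2 - √2 s)` and `4 - 2s² = (2 + √2 s)(2 - √2 s)`.
Hence `h γ = ((1 + x) / (2 + x))²` with `x = √2 sin γ`, a strictly increasing function of
`x ≥ 0`, and `x` is strictly increasing in `γ` on `[π/4, π/2]`, starting at `x = 1`.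
-/

open Real Set

lemma strictMonoOn_sq_one_add_div_two_add :
    StrictMonoOn (fun x : ℝ => ((1 + x) / (2 + x)) ^ 2) (Ici 0) := by
  intro x (hx : 0 ≤ x) y (hy : 0 ≤ y) hxy
  have hbase : (1 + x) / (2 + x) < (1 + y) / (2 + y) := by
    rw [div_lt_div_iff₀ (by linarith) (by linarith)]
    nlinarith
  exact pow_lt_pow_left₀ hbase (by positivity) two_ne_zero

lemma strictMonoOn_sqrt_two_mul_sin :
    StrictMonoOn (fun γ => √2 * sin γ) (Icc (π / 4) (π / 2)) := by
  intro a ha b hb hab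
  have hsub : Icc (π / 4) (π / 2) ⊆ Icc (-(π / 2)) (π / 2) :=
    Icc_subset_Icc (by linarith [pi_pos]) le_rfl
  exact mul_lt_mul_of_pos_left (strictMonoOn_sin (hsub ha) (hsub hb) hab) (by positivity)

lemma mapsTo_sqrt_two_mul_sin :
    MapsTo (fun γ => √2 * sin γ) (Icc (π / 4) (π / 2)) (Ici 0) := fun γ hγ =>
  mul_nonneg (sqrt_nonneg 2)
    (sin_nonneg_of_nonneg_of_le_pi (by linarith [hγ.1, pi_pos]) (by linarith [hγ.2, pi_pos]))

lemma one_add_cos_two_mul_add_div_three_add_cos_two_mul (γ : ℝ) :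
    (1 + cos (2 * γ) + √2 * sin γ) / (3 + cos (2 * γ))
      = (1 + √2 * sin γ) / (2 + √2 * sin γ) := by
  have hsqrt : √2 ^ 2 = 2 := sq_sqrt zero_le_two
  have hsqrt_lt : √2 < 2 := by nlinarith [sqrt_nonneg 2]
  have hs := abs_le.mp (abs_sin_le_one γ)
  have hplus : 0 < 2 + √2 * sin γ := by nlinarith [sqrt_nonneg 2]
  rw [cos_two_mul_eq_one_sub, div_eq_div_iff (by nlinarith) hplus.ne']
  linear_combination sin γ ^ 2 * hsqrt

theorem stmt8 :
    let h : ℝ → ℝ := fun γ1 =>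
      (1 + Real.cos (2*γ1) + Real.sqrt 2 * Real.sin γ1)^2 / (3 + Real.cos (2*γ1))^2
    (StrictMonoOn h (Set.Icc (π/4) (π/2)) ∧
      h (π/4) = 4/9 ∧
      (∀ γ1 ∈ Set.Icc (π/4) (π/2), 4/9 ≤ h γ1) ∧
      (∀ γ1 ∈ Set.Icc (π/4) (π/2), h γ1 = 4/9 → γ1 = π/4)) := by
  intro h
  have h_eq : h = (fun x : ℝ => ((1 + x) / (2 + x)) ^ 2) ∘ fun γ => √2 * sin γ := by
    funext γ
    simp only [h, Function.comp, ← div_pow, one_add_cos_two_mul_add_div_three_add_cos_two_mul]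
  have hmono : StrictMonoOn h (Icc (π / 4) (π / 2)) := h_eq ▸
    strictMonoOn_sq_one_add_div_two_add.comp strictMonoOn_sqrt_two_mul_sin mapsTo_sqrt_two_mul_sin
  have hval : h (π / 4) = 4 / 9 := by
    have hx : √2 * sin (π / 4) = 1 := by
      rw [sin_pi_div_four, ← mul_div_assoc, mul_self_sqrt zero_le_two, div_self two_ne_zero]
    rw [h_eq, Function.comp_apply, hx]
    norm_num
  have hleft : π / 4 ∈ Icc (π / 4) (π / 2) := ⟨le_rfl, by linarith [pi_pos]⟩
  refine ⟨hmono, hval, fun γ hγ => ?_, fun γ hγ hγval => ?_⟩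
  · exact hval ▸ (hmono.le_iff_le hleft hγ).mpr hγ.1
  · exact hmono.injOn hγ hleft (hγval.trans hval.symm)
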